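/- The translation T from λυ-terms to suspension terms (with associated translation E of λυ-substitutions to triples (ol, nl, e)) always produces well-formed suspension terms: for every λυ-term a, T(a) is a well-formed suspension term; moreover, whenever (ol,nl,e)=E(s), one has ol = len(e), nl ≥ lev(e), and e is a well-formed suspension environment. -/
import Mathlib


mutual
inductive STerm : Type
  | const : ℕ → STerm
  | var   : ℕ → STerm
  | app   : STerm → STerm → STerm
  | lam   : STerm → STerm
  | susp  : STerm → ℕ → ℕ → SEnv → STerm
inductive SEnv : Type
  | nil   : SEnv
  | cons  : STerm → ℕ → SEnv → SEnv
  | merge : SEnv → ℕ → ℕ → SEnv → SEnv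
end

/-- Length of an environment. -/
def SEnv.len : SEnv → ℕ
  | .nil => 0
  | .cons _ _ e => 1 + e.len
  | .merge e1 nl1 ol2 _ => e1.len + (ol2 - nl1)

/-- Level of an environment. -/
def SEnv.lev : SEnv → ℕ
  | .nil => 0
  | .cons _ n _ => n
  | .merge _ nl1 ol2 e2 => e2.lev + (nl1 - ol2)

mutual
/-- Well-formedness of suspension terms. -/
def STerm.wf : STerm → Prop
  | .const _ => True
  | .var _ => True
  | .app t1 t2 => t1.wf ∧ t2.wf
  | .lam t => t.wf
  | .susp t ol nl e => t.wf ∧ e.wf ∧ e.len = ol ∧ e.lev ≤ nl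
/-- Well-formedness of suspension environments. -/
def SEnv.wf : SEnv → Prop
  | .nil => True
  | .cons t n e => t.wf ∧ e.wf ∧ e.lev ≤ n
  | .merge e1 nl1 ol2 e2 => e1.wf ∧ e2.wf ∧ e2.len = ol2 ∧ e1.lev ≤ nl1
end

/-- A simple environment: no merged environments on the top spine. -/
def SEnv.simple : SEnv → Prop
  | .nil => True
  | .cons _ _ e => e.simple
  | .merge _ _ _ _ => False


mutual
/-- λυ-terms. -/
inductive UTm : Type
  | idx  : ℕ → UTm               -- de Bruijn index n̲
  | app  : UTm → UTm → UTm
  | lam  : UTm → UTm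
  | clos : UTm → USub → UTm      -- a[s]
/-- λυ-substitutions. -/
inductive USub : Type
  | slash : UTm → USub           -- a/
  | lift  : USub → USub          -- ⇑(s)
  | shift : USub                 -- ↑
end

mutual
/-- Translation T from λυ-terms to suspension terms. -/
def Tu : UTm → STerm
  | .idx n => .var n
  | .app a b => .app (Tu a) (Tu b)
  | .lam a => .lam (Tu a)
  | .clos a s => .susp (Tu a) (Eu s).1 (Eu s).2.1 (Eu s).2.2
/-- Translation E from λυ-substitutions to (ol, nl, environment) triples. -/
def Eu : USub → ℕ × ℕ × SEnv
  | .slash a => (1, 0, .cons (Tu a) 0 .nil)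
  | .lift s =>
      ((Eu s).1 + 1, (Eu s).2.1 + 1, .cons (.var 1) ((Eu s).2.1 + 1) (Eu s).2.2)
  | .shift => (0, 1, .nil)
end


mutual
theorem tWf : ∀ a : UTm, (Tu a).wf
  | .idx n => by simp [Tu, STerm.wf]
  | .app a b => by simp [Tu, STerm.wf]; exact ⟨tWf a, tWf b⟩
  | .lam a => by simp [Tu, STerm.wf]; exact tWf a
  | .clos a s => by
      have h := eWf s
      simp [Tu, STerm.wf]
      exact ⟨tWf a, h.2.2, h.1.symm, h.2.1⟩
theorem eWf : ∀ s : USub, (Eu s).1 = (Eu s).2.2.len ∧ (Eu s).2.2.lev ≤ (Eu s).2.1 ∧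
      (Eu s).2.2.wf
  | .slash a => by
      simp [Eu, SEnv.len, SEnv.lev, SEnv.wf, STerm.wf]
      exact tWf a
  | .lift s => by
      have h := eWf s
      simp [Eu, SEnv.len, SEnv.lev, SEnv.wf, STerm.wf]
      exact ⟨by omega, h.2.2, le_trans h.2.1 (Nat.le_succ _)⟩
  | .shift => by simp [Eu, SEnv.len, SEnv.lev, SEnv.wf]
end

/-- the translation from λυ to the suspension calculus produces
well-formed suspension terms; and on substitutions, (ol,nl,e) = E(s) satisfies
ol = len(e), nl ≥ lev(e), and e well-formed. -/
theorem stmt14 :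
    (∀ a : UTm, (Tu a).wf) ∧
    (∀ s : USub, (Eu s).1 = (Eu s).2.2.len ∧ (Eu s).2.2.lev ≤ (Eu s).2.1 ∧
      (Eu s).2.2.wf) := by
  exact ⟨tWf, eWf⟩
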